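/- Assume BZ = 0, ZC = 0, and A^π·B·C = 0. Let W = A·A^d + A^d·B·C·A^d, let P = [[A^2·A^d, A·A^d·B], [C·A·A^d, C·A^d·B]], and let T = [[A·A^π, A^π·B], [0, Z]] + P^π·[[A^2·A^d, A·A^d·B], [C, C·A^d·B]]. Then the Drazin inverse of P is P^d = [I; C·A^d]·((A·W)^d)^2·A·[I, A^d·B] (the product of the (m+n)×m block column [I; C·A^d], the m×m matrix ((A·W)^d)^2·A, and the m×(m+n) block row [I, A^d·B]), the Drazin inverse of T is T^d = P^π·Σ_{j=0}^{n'−1} P^j·[[0, 0], [0, (Z^d)^{j+1}]] where n' is any positive integer with n' ≥ ind(P), and for any positive integer g with g ≥ ind(T), the Drazin inverse of M is M^d = P^d + Σ_{k=0}^{g−1} (P^d)^{k+2}·[[0, 0], [C·A^π, 0]]·T^k·T^π + T^d. -/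

import Mathlib

open Matrix Finset

/-- `X` is the Drazin inverse of `A`: `A X = X A`, `X A X = X`, and
`A^(k+1) X = A^k` for some (hence all sufficiently large) `k`. -/
def IsDrazinInverse {ι : Type*} [Fintype ι] [DecidableEq ι]
    (A X : Matrix ι ι ℂ) : Prop :=
  A * X = X * A ∧ X * A * X = X ∧ ∃ k : ℕ, A ^ (k + 1) * X = A ^ k

/-!
Write `M = P + N + E` with `N = [[A A^π, A^π B], [0, Z]]`, `E = [[0, 0], [C A^π, 0]]` and
`A^π = 1 - A A^d`; the hypotheses make `PN`, `NP`, `NE`, `EP` and `E²` vanish.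

`P = [1; C A^d] · [A² A^d, A A^d B]` and the reversed product is `A W`, so `P^d` is given by
Cline's formula `(UV)^d = U ((VU)^d)² V`.

The rest is the additive formula `(a + b)^d = a^d + ∑_{i<r} (b^d)^(i+1) a^i a^π`, valid when
`ab = 0`, `b a^d = 0` and `a^r a^π = 0`: `a + b` is the orthogonal sum of `a² a^d` and
`a a^π + b`, and the latter is a nilpotent perturbation of `b`. With nilpotent `b` it shows
`N^d = [[0, 0], [0, Z^d]]` (take `a = [[0, 0], [0, Z]]`) and then `T^d = N^d`, where
`T = N + P^π (P + E)`. Since `M = T + P P^d (P + E)` and, by Cline again,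
`(P P^d (P + E))^d = (P^d)² (P + E) = P^d + (P^d)² E`, it also gives `M^d`.
-/

open Filter

section Ring

variable {R : Type*} [Ring R] {a b : R}

theorem mul_add_pow_of_mul_eq_zero (hab : a * b = 0) (n : ℕ) :
    a * (a + b) ^ n = a ^ (n + 1) := by
  induction n with
  | zero => simp
  | succ n ih => rw [pow_succ, ← mul_assoc, ih, mul_add, pow_succ a n, mul_assoc (a ^ n) a b, hab,
      mul_zero, add_zero, ← pow_succ, ← pow_succ]

theorem add_pow_add_of_mul_eq_zero (hab : a * b = 0) {m : ℕ} (ha : a ^ m = 0) (j : ℕ) :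
    (a + b) ^ (m + j) = b ^ j * (a + b) ^ m := by
  induction j with
  | zero => simp
  | succ j ih =>
    rw [← add_assoc, pow_succ', add_mul, mul_add_pow_of_mul_eq_zero hab, pow_succ, pow_add, ha,
      zero_mul, zero_mul, zero_add, ih, ← mul_assoc, ← pow_succ']

theorem IsNilpotent.add_of_mul_eq_zero (hab : a * b = 0) (ha : IsNilpotent a)
    (hb : IsNilpotent b) : IsNilpotent (a + b) := by
  obtain ⟨m, hm⟩ := ha
  obtain ⟨j, hj⟩ := hb
  exact ⟨m + j, by rw [add_pow_add_of_mul_eq_zero hab hm, hj, zero_mul]⟩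

theorem add_sq_mul_pow_succ (hba : b * a = 0) (i : ℕ) :
    (a + a ^ 2 * b) ^ (i + 1) = a ^ (i + 1) + a ^ (i + 2) * b := by
  induction i with
  | zero => simp
  | succ i ih =>
    have hbab : b * (a ^ 2 * b) = 0 := by rw [sq, ← mul_assoc, ← mul_assoc, hba, zero_mul, zero_mul]
    rw [pow_succ, ih]
    simp only [add_mul, mul_add, mul_assoc, hba, hbab, mul_zero, add_zero]
    rw [← pow_succ, ← mul_assoc, ← pow_add]

theorem sum_pow_succ_mul_pow_mul_add {y : R} (hab : a * b = 0) {r : ℕ} (ha : a ^ (r + 1) = 0) :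
    (∑ i ∈ range (r + 1), y ^ (i + 1) * a ^ i) * (a + b)
      = y * b + ∑ i ∈ range r, y ^ (i + 1) * a ^ (i + 1) := by
  have hXa : (∑ i ∈ range (r + 1), y ^ (i + 1) * a ^ i) * a
      = ∑ i ∈ range r, y ^ (i + 1) * a ^ (i + 1) := by
    rw [sum_mul, sum_range_succ, mul_assoc, ← pow_succ, ha, mul_zero, add_zero]
    exact sum_congr rfl fun i _ => by rw [mul_assoc, ← pow_succ]
  have hXb : (∑ i ∈ range (r + 1), y ^ (i + 1) * a ^ i) * b = y * b := by
    rw [sum_mul, sum_range_succ', zero_add, pow_zero, pow_one, mul_one, add_eq_right]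
    exact sum_eq_zero fun i _ => by rw [pow_succ a i, mul_assoc, mul_assoc, hab, mul_zero,
      mul_zero]
  rw [mul_add, hXa, hXb, add_comm]

end Ring

namespace Matrix

variable {α l o p q r : Type*} [Semiring α] [Fintype o]

theorem mul_pow_succ_eq_mul_pow_mul [Fintype p] [DecidableEq o] [DecidableEq p] (U : Matrix o p α)
    (V : Matrix p o α) (k : ℕ) : (U * V) ^ (k + 1) = U * (V * U) ^ k * V := by
  induction k with
  | zero => simp
  | succ k ih => rw [pow_succ, ih, pow_succ, Matrix.mul_assoc, Matrix.mul_assoc, Matrix.mul_assoc,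
      Matrix.mul_assoc, Matrix.mul_assoc]

theorem isNilpotent_mul_swap [Fintype p] [DecidableEq o] [DecidableEq p] {U : Matrix o p α}
    {V : Matrix p o α} (h : IsNilpotent (V * U)) : IsNilpotent (U * V) := by
  obtain ⟨k, hk⟩ := h
  exact ⟨k + 1, by rw [mul_pow_succ_eq_mul_pow_mul, hk, Matrix.mul_zero, Matrix.zero_mul]⟩

theorem mul_mul_eq_of_mul_eq [Fintype p] {M : Matrix l o α} {N : Matrix o p α} {L : Matrix l p α}
    (h : M * N = L) (W : Matrix p q α) : M * (N * W) = L * W := by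
  rw [← Matrix.mul_assoc, h]

theorem mul_mul_mul_eq_of_mul_mul_eq [Fintype p] [Fintype q] {M : Matrix l o α} {N : Matrix o p α}
    {K : Matrix p q α} {L : Matrix l q α} (h : M * N * K = L) (W : Matrix q r α) :
    M * (N * (K * W)) = L * W := by
  rw [← Matrix.mul_assoc, ← Matrix.mul_assoc, h]

theorem mul_mul_comm_of_commute {M N : Matrix o o α} (h : Commute M N) (W : Matrix o p α) :
    M * (N * W) = N * (M * W) := by
  rw [← Matrix.mul_assoc, h.eq, Matrix.mul_assoc]

end Matrix

namespace IsDrazinInverse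

variable {ι : Type*} [Fintype ι] [DecidableEq ι] {A X Y a b u : Matrix ι ι ℂ}

theorem commute (h : IsDrazinInverse A X) : Commute A X := h.1

theorem inv_mul_inv (h : IsDrazinInverse A X) : X * A * X = X := h.2.1

theorem mul_inv_inv (h : IsDrazinInverse A X) : A * X * X = X := by
  rw [h.1]; exact h.2.1

theorem inv_inv_mul (h : IsDrazinInverse A X) : X * X * A = X := by
  rw [mul_assoc, ← h.1, ← mul_assoc]; exact h.2.1

theorem isIdempotentElem_mul_inv (h : IsDrazinInverse A X) : IsIdempotentElem (A * X) := by
  rw [IsIdempotentElem, mul_assoc, ← mul_assoc X, h.2.1]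

theorem inv_mul_one_sub (h : IsDrazinInverse A X) : X * (1 - A * X) = 0 := by
  rw [mul_sub, mul_one, ← mul_assoc, h.2.1, sub_self]

theorem one_sub_mul_inv (h : IsDrazinInverse A X) : (1 - A * X) * X = 0 := by
  rw [sub_mul, one_mul, h.mul_inv_inv, sub_self]

theorem commute_one_sub (h : IsDrazinInverse A X) : Commute A (1 - A * X) :=
  (Commute.one_right A).sub_right ((Commute.refl A).mul_right h.commute)

theorem inv_mul_eq_zero (h : IsDrazinInverse A X) {κ : Type*} [Fintype κ]
    {W : Matrix ι κ ℂ} (hW : A * W = 0) : X * W = 0 := by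
  rw [← h.inv_inv_mul, Matrix.mul_assoc, hW, Matrix.mul_zero]

theorem mul_inv_eq_zero (h : IsDrazinInverse A X) {κ : Type*} [Fintype κ]
    {W : Matrix κ ι ℂ} (hW : W * A = 0) : W * X = 0 := by
  rw [← h.mul_inv_inv, ← Matrix.mul_assoc, ← Matrix.mul_assoc, hW, Matrix.zero_mul,
    Matrix.zero_mul]

theorem of_pow_mul_one_sub_eq_zero (hc : Commute A X) (hX : X * A * X = X) {k : ℕ}
    (hk : A ^ k * (1 - A * X) = 0) : IsDrazinInverse A X := by
  refine ⟨hc, hX, k, ?_⟩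
  rw [mul_sub, mul_one, sub_eq_zero] at hk
  rw [pow_succ, mul_assoc, ← hk]

theorem eventually_pow_mul_one_sub_eq_zero (h : IsDrazinInverse A X) :
    ∀ᶠ j in atTop, A ^ j * (1 - A * X) = 0 := by
  obtain ⟨k, hk⟩ := h.2.2
  filter_upwards [eventually_ge_atTop k] with j hj
  obtain ⟨i, rfl⟩ := Nat.exists_eq_add_of_le' hj
  rw [pow_add, mul_assoc, mul_sub, mul_one, ← mul_assoc, ← pow_succ, hk, sub_self, mul_zero]

theorem pow_mul_inv_pow_succ (h : IsDrazinInverse A X) (k : ℕ) : A ^ k * X ^ (k + 1) = X := by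
  rw [pow_succ, ← mul_assoc, ← h.commute.mul_pow]
  rcases k with _ | k
  · simp
  · rw [h.isIdempotentElem_mul_inv.pow_succ_eq, h.mul_inv_inv]

theorem unique (hX : IsDrazinInverse A X) (hY : IsDrazinInverse A Y) : X = Y := by
  obtain ⟨k, hkX, hkY⟩ :=
    (hX.eventually_pow_mul_one_sub_eq_zero.and hY.eventually_pow_mul_one_sub_eq_zero).exists
  rw [mul_sub, mul_one, sub_eq_zero, ← mul_assoc, ← pow_succ] at hkX hkY
  calc X = X ^ (k + 1) * A ^ k := by
          rw [← (hX.commute.pow_pow k (k + 1)).eq, hX.pow_mul_inv_pow_succ]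
    _ = A * X * Y := by
          rw [hkY, ← mul_assoc, ← hX.commute.symm.mul_pow, ← hX.commute.eq,
            hX.isIdempotentElem_mul_inv.pow_succ_eq]
    _ = X * (A ^ (k + 1) * Y ^ (k + 1)) := by
          rw [← hY.commute.mul_pow, hY.isIdempotentElem_mul_inv.pow_succ_eq, ← mul_assoc,
            hX.commute.eq]
    _ = Y := by
          rw [← mul_assoc, ← (hX.commute.pow_left (k + 1)).eq, ← hkX, hY.pow_mul_inv_pow_succ]

theorem of_isNilpotent (h : IsNilpotent A) : IsDrazinInverse A 0 := by
  obtain ⟨k, hk⟩ := h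
  exact of_pow_mul_one_sub_eq_zero (Commute.zero_right A) (by simp) (k := k) (by simp [hk])

theorem mul_one_sub_pow_succ (h : IsDrazinInverse A X) (k : ℕ) :
    (A * (1 - A * X)) ^ (k + 1) = A ^ (k + 1) * (1 - A * X) := by
  rw [h.commute_one_sub.mul_pow, h.isIdempotentElem_mul_inv.one_sub.pow_succ_eq]

theorem isNilpotent_mul_one_sub (h : IsDrazinInverse A X) : IsNilpotent (A * (1 - A * X)) := by
  obtain ⟨k, hk⟩ := h.eventually_pow_mul_one_sub_eq_zero.exists
  exact ⟨k + 1, by rw [h.mul_one_sub_pow_succ, pow_succ', mul_assoc, hk, mul_zero]⟩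

theorem core (h : IsDrazinInverse A X) : IsDrazinInverse (A * (A * X)) X := by
  have hAX : A * (A * X) * X = A * X := by rw [mul_assoc, h.mul_inv_inv]
  refine of_pow_mul_one_sub_eq_zero (h.commute.mul_left (h.commute.mul_left (Commute.refl X)))
    ?_ (k := 1) ?_
  · rw [mul_assoc X, hAX, ← mul_assoc, h.inv_mul_inv]
  · rw [pow_one, hAX, mul_assoc, mul_sub, mul_one, h.isIdempotentElem_mul_inv.eq, sub_self,
      mul_zero]

theorem cline {κ : Type*} [Fintype κ] [DecidableEq κ] {U : Matrix ι κ ℂ} {V : Matrix κ ι ℂ}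
    {Y : Matrix κ κ ℂ} (hY : IsDrazinInverse (V * U) Y) :
    IsDrazinInverse (U * V) (U * Y ^ 2 * V) := by
  have hL : U * V * (U * Y ^ 2 * V) = U * Y * V := by
    calc U * V * (U * Y ^ 2 * V) = U * (V * U * Y * Y) * V := by simp only [sq, Matrix.mul_assoc]
      _ = U * Y * V := by rw [hY.mul_inv_inv]
  have hR : U * Y ^ 2 * V * (U * V) = U * Y * V := by
    calc U * Y ^ 2 * V * (U * V) = U * (Y * Y * (V * U)) * V := by simp only [sq, Matrix.mul_assoc]
      _ = U * Y * V := by rw [hY.inv_inv_mul]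
  obtain ⟨j, hj⟩ := hY.eventually_pow_mul_one_sub_eq_zero.exists
  refine of_pow_mul_one_sub_eq_zero (hL.trans hR.symm) ?_ (k := j + 1) ?_
  · calc U * Y ^ 2 * V * (U * V) * (U * Y ^ 2 * V) = U * (Y * Y * (V * U) * Y) * V := by
          rw [Matrix.mul_assoc _ (U * V), hL]; simp only [sq, Matrix.mul_assoc]
      _ = U * Y ^ 2 * V := by rw [hY.inv_inv_mul, sq]
  · calc (U * V) ^ (j + 1) * (1 - U * V * (U * Y ^ 2 * V))
        = U * ((V * U) ^ j * (1 - V * U * Y)) * V := by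
          rw [hL, Matrix.mul_pow_succ_eq_mul_pow_mul]
          simp only [Matrix.mul_sub, Matrix.sub_mul, Matrix.mul_one, Matrix.mul_assoc]
      _ = 0 := by rw [hj, Matrix.mul_zero, Matrix.zero_mul]

theorem add_of_orthogonal {A₁ A₂ X₁ X₂ : Matrix ι ι ℂ} (h₁ : IsDrazinInverse A₁ X₁)
    (h₂ : IsDrazinInverse A₂ X₂) (h₁₂ : A₁ * A₂ = 0) (h₂₁ : A₂ * A₁ = 0) :
    IsDrazinInverse (A₁ + A₂) (X₁ + X₂) := by
  have hAX₁₂ : A₁ * X₂ = 0 := h₂.mul_inv_eq_zero h₁₂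
  have hAX₂₁ : A₂ * X₁ = 0 := h₁.mul_inv_eq_zero h₂₁
  have hXA₁₂ : X₁ * A₂ = 0 := h₁.inv_mul_eq_zero h₁₂
  have hXA₂₁ : X₂ * A₁ = 0 := h₂.inv_mul_eq_zero h₂₁
  have hAX : (A₁ + A₂) * (X₁ + X₂) = A₁ * X₁ + A₂ * X₂ := by
    rw [add_mul, mul_add, mul_add, hAX₁₂, hAX₂₁, add_zero, zero_add]
  have hXA : (X₁ + X₂) * (A₁ + A₂) = A₁ * X₁ + A₂ * X₂ := by
    rw [add_mul, mul_add, mul_add, hXA₁₂, hXA₂₁, add_zero, zero_add, h₁.1, h₂.1]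
  have hpow (j : ℕ) : (A₁ + A₂) ^ (j + 1) = A₁ ^ (j + 1) + A₂ ^ (j + 1) := by
    induction j with
    | zero => simp
    | succ j ih =>
      rw [pow_succ, ih, add_mul, mul_add, mul_add, pow_succ A₁ j, mul_assoc _ A₁ A₂, h₁₂,
        pow_succ A₂ j, mul_assoc _ A₂ A₁, h₂₁, mul_zero, mul_zero, add_zero, zero_add,
        ← pow_succ, ← pow_succ, ← pow_succ, ← pow_succ]
  obtain ⟨k, hk₁, hk₂⟩ :=
    (h₁.eventually_pow_mul_one_sub_eq_zero.and h₂.eventually_pow_mul_one_sub_eq_zero).exists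
  refine of_pow_mul_one_sub_eq_zero (hAX.trans hXA.symm) ?_ (k := k + 1) ?_
  · rw [hXA, add_mul, mul_add, mul_add, h₁.mul_inv_inv, h₂.mul_inv_inv, mul_assoc A₁,
      h₂.mul_inv_eq_zero hXA₁₂, mul_assoc A₂, h₁.mul_inv_eq_zero hXA₂₁, mul_zero, mul_zero,
      add_zero, zero_add]
  · have z₁ : A₁ ^ (k + 1) * (1 - A₁ * X₁) = 0 := by rw [pow_succ', mul_assoc, hk₁, mul_zero]
    have z₂ : A₂ ^ (k + 1) * (1 - A₂ * X₂) = 0 := by rw [pow_succ', mul_assoc, hk₂, mul_zero]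
    have z₁₂ : A₁ ^ (k + 1) * A₂ = 0 := by rw [pow_succ, mul_assoc, h₁₂, mul_zero]
    have z₂₁ : A₂ ^ (k + 1) * A₁ = 0 := by rw [pow_succ, mul_assoc, h₂₁, mul_zero]
    calc (A₁ + A₂) ^ (k + 1) * (1 - (A₁ + A₂) * (X₁ + X₂))
        = A₁ ^ (k + 1) * (1 - A₁ * X₁) - A₁ ^ (k + 1) * A₂ * X₂
          + (A₂ ^ (k + 1) * (1 - A₂ * X₂) - A₂ ^ (k + 1) * A₁ * X₁) := by
          rw [hpow, hAX]; simp only [mul_sub, add_mul, mul_add, mul_one, mul_assoc]; abel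
      _ = 0 := by rw [z₁, z₂, z₁₂, z₂₁]; simp

theorem mul_sum_pow_succ_mul_pow (hb : IsDrazinInverse b Y) (u : Matrix ι ι ℂ) (r : ℕ) :
    b * ∑ i ∈ range (r + 1), Y ^ (i + 1) * u ^ i
      = Y * b + ∑ i ∈ range r, Y ^ (i + 1) * u ^ (i + 1) := by
  rw [sum_range_succ', mul_add, mul_sum, zero_add, pow_zero, pow_one, mul_one, hb.1, add_comm]
  congr 1
  exact sum_congr rfl fun i _ => by
    rw [pow_succ' Y (i + 1), pow_succ' Y i, ← mul_assoc, ← mul_assoc, ← mul_assoc,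
      hb.mul_inv_inv, ← pow_succ']

theorem nilpotent_add {r : ℕ} (hb : IsDrazinInverse b Y) (hub : u * b = 0) (hu : u ^ r = 0) :
    IsDrazinInverse (u + b) (∑ i ∈ range r, Y ^ (i + 1) * u ^ i) := by
  rcases r with _ | r
  · have := subsingleton_of_zero_eq_one hu.symm
    exact ⟨Subsingleton.elim _ _, Subsingleton.elim _ _, 0, Subsingleton.elim _ _⟩
  set X := ∑ i ∈ range (r + 1), Y ^ (i + 1) * u ^ i with hX
  set S := ∑ i ∈ range r, Y ^ (i + 1) * u ^ (i + 1) with hS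
  have huY : u * Y = 0 := hb.mul_inv_eq_zero hub
  have huX : u * X = 0 := by
    rw [hX, mul_sum]
    exact sum_eq_zero fun i _ => by rw [← mul_assoc, pow_succ', ← mul_assoc, huY, zero_mul,
      zero_mul]
  have hsX : (u + b) * X = Y * b + S := by
    rw [add_mul, huX, zero_add, hX, hb.mul_sum_pow_succ_mul_pow]
  have he : (u + b) * X = X * (u + b) := hsX.trans (sum_pow_succ_mul_pow_mul_add hub hu).symm
  have hSX : S * X = 0 := by
    rw [hS, sum_mul]
    exact sum_eq_zero fun i _ => by
      rw [mul_assoc, pow_succ u i, mul_assoc, huX, mul_zero, mul_zero]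
  have hXe : X * (u + b) * X = X := by
    calc X * (u + b) * X = Y * (b * X) + S * X := by rw [← he, hsX, add_mul, mul_assoc]
      _ = Y * (Y * b + S) := by rw [hSX, add_zero, ← hsX, add_mul, huX, zero_add]
      _ = X := by
        rw [mul_add, ← mul_assoc, hb.inv_inv_mul, hX, sum_range_succ', hS, mul_sum]
        simp only [← mul_assoc, ← pow_succ', zero_add, pow_zero, pow_one, mul_one, add_comm Y]
  have hSs : S * (u + b) ^ (r + 1) = 0 := by
    rw [hS, sum_mul]
    exact sum_eq_zero fun i _ => by
      rw [mul_assoc, pow_succ u i, mul_assoc, mul_add_pow_of_mul_eq_zero hub, pow_succ u (r + 1),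
        hu, zero_mul, mul_zero, mul_zero]
  obtain ⟨t, ht⟩ := hb.eventually_pow_mul_one_sub_eq_zero.exists
  have hcomm : Commute (u + b) (1 - (u + b) * X) :=
    (Commute.one_right _).sub_right ((Commute.refl _).mul_right he)
  -- `(u + b)^(r+1+t) = b^t (u + b)^(r+1)`, and in front of `(u + b)^(r+1)` the idempotent
  -- `(u + b) X` acts as `b b^d`.
  refine of_pow_mul_one_sub_eq_zero he hXe (k := r + 1 + t) ?_
  calc (u + b) ^ (r + 1 + t) * (1 - (u + b) * X)
      = b ^ t * ((1 - (u + b) * X) * (u + b) ^ (r + 1)) := by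
        rw [add_pow_add_of_mul_eq_zero hub hu, mul_assoc, (hcomm.pow_left _).eq]
    _ = b ^ t * ((1 - b * Y) * (u + b) ^ (r + 1)) := by
        rw [hsX, ← hb.1, sub_mul, add_mul, hSs, add_zero, ← sub_mul]
    _ = 0 := by rw [← mul_assoc, ht, zero_mul]

theorem add_of_mul_eq_zero {r : ℕ} (ha : IsDrazinInverse a X) (hb : IsDrazinInverse b Y)
    (hab : a * b = 0) (hbX : b * X = 0) (hr : a ^ r * (1 - a * X) = 0) :
    IsDrazinInverse (a + b) (X + ∑ i ∈ range r, Y ^ (i + 1) * a ^ i * (1 - a * X)) := by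
  have hXb : X * b = 0 := ha.inv_mul_eq_zero hab
  rcases r with _ | r
  · rw [pow_zero, one_mul] at hr
    have hb0 : b = 0 := by
      calc b = (1 - a * X) * b + a * (X * b) := by noncomm_ring
        _ = 0 := by rw [hr, hXb, zero_mul, mul_zero, add_zero]
    simpa [hb0] using ha
  have hu : (a * (1 - a * X)) ^ (r + 1) = 0 := by rw [ha.mul_one_sub_pow_succ, hr]
  have hub : a * (1 - a * X) * b = 0 := by
    rw [mul_assoc, sub_mul, one_mul, mul_assoc, hXb, mul_zero, sub_zero, hab]
  have h₁₂ : a * (a * X) * (a * (1 - a * X) + b) = 0 := by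
    have hXaπ : X * (a * (1 - a * X)) = 0 := by
      rw [← mul_assoc, ← ha.commute.eq, mul_assoc, ha.inv_mul_one_sub, mul_zero]
    simp only [mul_add, mul_assoc, hXaπ, hXb, mul_zero, add_zero]
  have h₂₁ : (a * (1 - a * X) + b) * (a * (a * X)) = 0 := by
    have hcore : a * (a * X) = X * (a * a) := by
      rw [ha.commute.eq, ← mul_assoc, ha.commute.eq, mul_assoc]
    rw [hcore, add_mul, mul_assoc a, ← mul_assoc (1 - a * X) X, ha.one_sub_mul_inv, zero_mul,
      mul_zero, ← mul_assoc, hbX, zero_mul, add_zero]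
  have hYX : Y * X = 0 := hb.inv_mul_eq_zero hbX
  convert ha.core.add_of_orthogonal (hb.nilpotent_add hub hu) h₁₂ h₂₁ using 1
  · noncomm_ring
  · congr 1
    refine sum_congr rfl fun i _ => ?_
    rcases i with _ | i
    · simp only [zero_add, pow_one, pow_zero, mul_one]
      rw [mul_sub, mul_one, ha.commute.eq, ← mul_assoc, hYX, zero_mul, sub_zero]
    · rw [ha.mul_one_sub_pow_succ, mul_assoc]

theorem add_of_isNilpotent (ha : IsDrazinInverse a X) (hab : a * b = 0) (hbX : b * X = 0)
    (hb : IsNilpotent b) : IsDrazinInverse (a + b) X := by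
  obtain ⟨r, hr⟩ := ha.eventually_pow_mul_one_sub_eq_zero.exists
  simpa using ha.add_of_mul_eq_zero (of_isNilpotent hb) hab hbX hr

theorem fromBlocks_diagonal {κ : Type*} [Fintype κ] [DecidableEq κ] {D W : Matrix κ κ ℂ}
    (hA : IsDrazinInverse A X) (hD : IsDrazinInverse D W) :
    IsDrazinInverse (fromBlocks A 0 0 D) (fromBlocks X 0 0 W) := by
  obtain ⟨k, hkA, hkD⟩ :=
    (hA.eventually_pow_mul_one_sub_eq_zero.and hD.eventually_pow_mul_one_sub_eq_zero).exists
  refine of_pow_mul_one_sub_eq_zero ?_ ?_ (k := k) ?_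
  · simp [Commute, SemiconjBy, fromBlocks_multiply, hA.1, hD.1]
  · simp [fromBlocks_multiply, hA.inv_mul_inv, hD.inv_mul_inv]
  · rw [fromBlocks_diagonal_pow, fromBlocks_multiply, ← fromBlocks_one, sub_eq_add_neg,
      fromBlocks_neg, fromBlocks_add, fromBlocks_multiply]
    simp [← sub_eq_add_neg, hkA, hkD]

theorem one_sub_mul_sum_pow_mul (hA : IsDrazinInverse A X) {G : ℕ → Matrix ι ι ℂ}
    (hAG : ∀ j, A * G j = 0) {n : ℕ} (hn : 0 < n) :
    (1 - A * X) * ∑ j ∈ range n, A ^ j * G j = G 0 := by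
  obtain ⟨n, rfl⟩ := Nat.exists_eq_add_one.mpr hn
  rw [sum_range_succ', sum_eq_zero fun j _ => by rw [pow_succ, mul_assoc, hAG, mul_zero],
    zero_add, pow_zero, one_mul, sub_mul, one_mul, mul_assoc, hA.inv_mul_eq_zero (hAG 0),
    mul_zero, sub_zero]

variable {P Pd E : Matrix ι ι ℂ}

theorem isNilpotent_one_sub_mul_add (hPd : IsDrazinInverse P Pd) (hEP : E * P = 0)
    (hEE : E * E = 0) : IsNilpotent ((1 - P * Pd) * (P + E)) := by
  apply Matrix.isNilpotent_mul_swap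
  have h : (P + E) * (1 - P * Pd) = E + P * (1 - P * Pd) := by
    rw [add_mul, mul_sub E, mul_one, ← mul_assoc E, hEP, zero_mul, sub_zero, add_comm]
  rw [h]
  exact IsNilpotent.add_of_mul_eq_zero (by rw [← mul_assoc, hEP, zero_mul]) ⟨2, by rw [sq, hEE]⟩
    hPd.isNilpotent_mul_one_sub

theorem mul_mul_add (hPd : IsDrazinInverse P Pd) (hEP : E * P = 0) :
    IsDrazinInverse (P * Pd * (P + E)) (Pd ^ 2 * (P + E)) := by
  have hVU : IsDrazinInverse ((P + E) * (P * Pd)) Pd := by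
    rw [add_mul, ← mul_assoc E, hEP, zero_mul, add_zero]
    exact hPd.core
  have h := hVU.cline
  rwa [sq, ← mul_assoc, hPd.mul_inv_inv, ← sq] at h

end IsDrazinInverse

section Splitting

variable {ι : Type*} [Fintype ι] [DecidableEq ι] {P Pd N E F T : Matrix ι ι ℂ}

theorem isDrazinInverse_add_one_sub_mul_add (hPd : IsDrazinInverse P Pd)
    (hNF : IsDrazinInverse N F) (hNP : N * P = 0) (hNE : N * E = 0) (hEP : E * P = 0)
    (hEE : E * E = 0) (hPF : P * F = 0) (hEF : E * F = 0) :
    IsDrazinInverse (N + (1 - P * Pd) * (P + E)) F := by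
  refine hNF.add_of_isNilpotent ?_ ?_ (hPd.isNilpotent_one_sub_mul_add hEP hEE)
  · rw [← mul_assoc, mul_sub, mul_one, ← mul_assoc, hNP, zero_mul, sub_zero, mul_add, hNP, hNE,
      add_zero]
  · rw [mul_assoc, add_mul, hPF, hEF, add_zero, mul_zero]

theorem isDrazinInverse_add_add (hPd : IsDrazinInverse P Pd) (hPN : P * N = 0)
    (hNP : N * P = 0) (hEP : E * P = 0) (hPF : P * F = 0) (hEF : E * F = 0)
    (hT : T = N + (1 - P * Pd) * (P + E)) (hTF : IsDrazinInverse T F) {g : ℕ} (hg : 0 < g)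
    (hgT : T ^ g * (1 - T * F) = 0) :
    IsDrazinInverse (P + N + E)
      (Pd + ∑ k ∈ range g, Pd ^ (k + 2) * E * T ^ k * (1 - T * F) + F) := by
  have hEPd : E * Pd = 0 := hPd.mul_inv_eq_zero hEP
  have hTPd : T * Pd = 0 := by
    rw [hT, add_mul, hPd.mul_inv_eq_zero hNP, zero_add, mul_assoc, add_mul, hEPd, add_zero,
      sub_mul, one_mul, hPd.isIdempotentElem_mul_inv.eq, sub_self]
  have hPdT : Pd * T = 0 := by
    rw [hT, mul_add, hPd.inv_mul_eq_zero hPN, zero_add, ← mul_assoc, hPd.inv_mul_one_sub,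
      zero_mul]
  have h := hTF.add_of_mul_eq_zero (hPd.mul_mul_add hEP)
    (by rw [← mul_assoc, hPd.commute.eq, ← mul_assoc, hTPd, zero_mul, zero_mul])
    (by rw [mul_assoc, add_mul, hPF, hEF, add_zero, mul_zero]) hgT
  have hsum : ∑ i ∈ range g, Pd ^ (i + 1) * T ^ i * (1 - T * F) = Pd := by
    obtain ⟨g, rfl⟩ := Nat.exists_eq_add_one.mpr hg
    rw [sum_range_succ', sum_eq_zero fun i _ => by
      rw [pow_succ Pd (i + 1), pow_succ' T i, mul_assoc (Pd ^ (i + 1)) Pd, ← mul_assoc Pd T, hPdT,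
        zero_mul, mul_zero, zero_mul]]
    rw [zero_add, pow_zero, mul_one, pow_one, mul_sub, mul_one, ← mul_assoc, hPdT, zero_mul,
      sub_zero]
  rw [show P + N + E = T + P * Pd * (P + E) by rw [hT]; noncomm_ring]
  convert h using 1
  rw [show Pd ^ 2 * (P + E) = Pd + Pd ^ 2 * E by rw [mul_add, sq, hPd.inv_inv_mul]]
  simp only [add_sq_mul_pow_succ hEPd, add_mul, sum_add_distrib, hsum]
  abel

end Splitting

section Blocks

variable {m n : Type*} [Fintype m] [DecidableEq m]

/- `blockP` is the paper's `P`; `blockN` and `blockE` are the `N` and `E` of the splitting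
`M = P + N + E`. -/

def blockP (A Ad : Matrix m m ℂ) (B : Matrix m n ℂ) (C : Matrix n m ℂ) :
    Matrix (m ⊕ n) (m ⊕ n) ℂ :=
  fromBlocks (A ^ 2 * Ad) (A * Ad * B) (C * A * Ad) (C * Ad * B)

def blockN (A Ad : Matrix m m ℂ) (B : Matrix m n ℂ) (Z : Matrix n n ℂ) :
    Matrix (m ⊕ n) (m ⊕ n) ℂ :=
  fromBlocks (A * (1 - A * Ad)) ((1 - A * Ad) * B) 0 Z

def blockE (A Ad : Matrix m m ℂ) (C : Matrix n m ℂ) : Matrix (m ⊕ n) (m ⊕ n) ℂ :=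
  fromBlocks 0 0 (C * (1 - A * Ad)) 0

variable {A Ad : Matrix m m ℂ} {B : Matrix m n ℂ} {C : Matrix n m ℂ} {Z : Matrix n n ℂ}

theorem blockP_mul_blockN_eq_zero [Fintype n] (hAd : IsDrazinInverse A Ad) (hBZ : B * Z = 0) :
    blockP A Ad B C * blockN A Ad B Z = 0 := by
  simp [blockP, blockN, fromBlocks_multiply, Matrix.mul_assoc, hAd.inv_mul_one_sub, hBZ,
    Matrix.mul_mul_eq_of_mul_eq hAd.inv_mul_one_sub,
    Matrix.mul_mul_comm_of_commute hAd.commute.symm]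

theorem blockN_mul_blockP_eq_zero [Fintype n] (hAd : IsDrazinInverse A Ad) (hZC : Z * C = 0)
    (hABC : (1 - A * Ad) * B * C = 0) : blockN A Ad B Z * blockP A Ad B C = 0 := by
  simp [blockP, blockN, fromBlocks_multiply, sq, Matrix.mul_assoc, hAd.one_sub_mul_inv,
    Matrix.mul_mul_eq_of_mul_eq hAd.one_sub_mul_inv,
    Matrix.mul_mul_comm_of_commute hAd.commute_one_sub.symm,
    Matrix.mul_mul_eq_of_mul_eq hZC,
    Matrix.mul_mul_mul_eq_of_mul_mul_eq hABC]

theorem blockN_mul_blockE_eq_zero [Fintype n] (hZC : Z * C = 0)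
    (hABC : (1 - A * Ad) * B * C = 0) : blockN A Ad B Z * blockE A Ad C = 0 := by
  simp [blockE, blockN, fromBlocks_multiply, Matrix.mul_assoc,
    Matrix.mul_mul_eq_of_mul_eq hZC,
    Matrix.mul_mul_mul_eq_of_mul_mul_eq hABC]

theorem blockE_mul_blockP_eq_zero [Fintype n] (hAd : IsDrazinInverse A Ad) :
    blockE A Ad C * blockP A Ad B C = 0 := by
  simp [blockE, blockP, fromBlocks_multiply, sq, Matrix.mul_assoc, hAd.one_sub_mul_inv,
    Matrix.mul_mul_eq_of_mul_eq hAd.one_sub_mul_inv,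
    Matrix.mul_mul_comm_of_commute hAd.commute_one_sub.symm]

theorem blockE_mul_blockE_eq_zero [Fintype n] : blockE A Ad C * blockE A Ad C = 0 := by
  simp [blockE, fromBlocks_multiply]

theorem blockP_mul_fromBlocks_eq_zero [Fintype n] {W : Matrix n n ℂ} (hBW : B * W = 0) :
    blockP A Ad B C * fromBlocks 0 0 0 W = 0 := by
  simp [blockP, fromBlocks_multiply, Matrix.mul_assoc, hBW]

theorem blockE_mul_fromBlocks_eq_zero [Fintype n] {W : Matrix n n ℂ} :
    blockE A Ad C * fromBlocks 0 0 0 W = 0 := by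
  simp [blockE, fromBlocks_multiply]

theorem fromBlocks_eq_blockP_add_blockE :
    fromBlocks (A ^ 2 * Ad) (A * Ad * B) C (C * Ad * B) = blockP A Ad B C + blockE A Ad C := by
  simp [blockE, blockP, fromBlocks_add, Matrix.mul_sub, Matrix.mul_assoc]

theorem fromBlocks_eq_blockP_add_blockN_add_blockE {D : Matrix n n ℂ} (hZ : Z = D - C * Ad * B) :
    fromBlocks A B C D = blockP A Ad B C + blockN A Ad B Z + blockE A Ad C := by
  simp [blockE, blockP, blockN, fromBlocks_add, Matrix.mul_sub, Matrix.sub_mul, sq,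
    Matrix.mul_assoc, hZ]

theorem isDrazinInverse_blockP [Fintype n] [DecidableEq n] {AWd : Matrix m m ℂ}
    (hAd : IsDrazinInverse A Ad) (hAWd : IsDrazinInverse (A * (A * Ad + Ad * B * C * Ad)) AWd) :
    IsDrazinInverse (blockP A Ad B C)
      (fromRows 1 (C * Ad) * (AWd ^ 2 * A) * fromCols 1 (Ad * B)) := by
  let U : Matrix (m ⊕ n) m ℂ := fromRows 1 (C * Ad)
  let V : Matrix m (m ⊕ n) ℂ := fromCols (A ^ 2 * Ad) (A * Ad * B)
  have hA : A * (Ad * Ad) = Ad := by rw [← Matrix.mul_assoc, hAd.mul_inv_inv]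
  have hUV : blockP A Ad B C = U * V := by
    rw [fromRows_mul_fromCols]
    simp [blockP, sq, Matrix.mul_assoc, hA, Matrix.mul_mul_comm_of_commute hAd.commute.symm,
      Matrix.mul_mul_mul_eq_of_mul_mul_eq hAd.mul_inv_inv]
  have hVU : IsDrazinInverse (V * U) AWd := by
    convert hAWd using 1
    simp [V, U, fromCols_mul_fromRows, sq, Matrix.mul_add, Matrix.mul_assoc]
  have hAWdπ : AWd * (1 - A * Ad) = 0 := hAWd.inv_mul_eq_zero (by
    simp [Matrix.mul_add, Matrix.add_mul, Matrix.mul_assoc, hAd.inv_mul_one_sub])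
  have hV : AWd ^ 2 * V = AWd ^ 2 * A * fromCols 1 (Ad * B) := by
    have hA2 : A ^ 2 * Ad = A - (1 - A * Ad) * A := by
      rw [sub_mul, one_mul, sub_sub_cancel, sq, Matrix.mul_assoc, Matrix.mul_assoc, hAd.commute.eq]
    rw [mul_fromCols, mul_fromCols, Matrix.mul_one]
    congr 1
    · rw [hA2, Matrix.mul_sub, ← Matrix.mul_assoc (AWd ^ 2) (1 - A * Ad), sq,
        Matrix.mul_assoc AWd AWd (1 - A * Ad), hAWdπ, Matrix.mul_zero, Matrix.zero_mul, sub_zero]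
    · simp only [Matrix.mul_assoc]
  have h := hVU.cline
  rwa [← hUV, Matrix.mul_assoc _ (AWd ^ 2), hV, ← Matrix.mul_assoc] at h

theorem isDrazinInverse_blockN [Fintype n] [DecidableEq n] {Zd : Matrix n n ℂ}
    (hAd : IsDrazinInverse A Ad) (hZd : IsDrazinInverse Z Zd) (hBZ : B * Z = 0) :
    IsDrazinInverse (blockN A Ad B Z) (fromBlocks 0 0 0 Zd) := by
  have hBZd : B * Zd = 0 := hZd.mul_inv_eq_zero hBZ
  let N₁ : Matrix (m ⊕ n) (m ⊕ n) ℂ := fromBlocks (A * (1 - A * Ad)) ((1 - A * Ad) * B) 0 0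
  have hsplit : blockN A Ad B Z = fromBlocks 0 0 0 Z + N₁ := by simp [N₁, blockN, fromBlocks_add]
  have hnil : IsNilpotent N₁ := by
    have : N₁ = fromRows (1 - A * Ad) 0 * fromCols A B := by
      rw [fromRows_mul_fromCols, ← hAd.commute_one_sub.eq]; simp [N₁]
    rw [this]
    exact Matrix.isNilpotent_mul_swap (by simpa [fromCols_mul_fromRows] using
      hAd.isNilpotent_mul_one_sub)
  rw [hsplit]
  refine (IsDrazinInverse.fromBlocks_diagonal (.of_isNilpotent .zero) hZd).add_of_isNilpotent
    ?_ ?_ hnil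
  · simp [N₁, fromBlocks_multiply]
  · simp [N₁, fromBlocks_multiply, Matrix.mul_assoc, hBZd]

end Blocks

theorem stmt_9_general {m n : ℕ}
    (A Ad : Matrix (Fin m) (Fin m) ℂ) (B : Matrix (Fin m) (Fin n) ℂ)
    (C : Matrix (Fin n) (Fin m) ℂ) (D : Matrix (Fin n) (Fin n) ℂ)
    (hAd : IsDrazinInverse A Ad)
    (Z : Matrix (Fin n) (Fin n) ℂ) (hZ : Z = D - C * Ad * B)
    (Zd : Matrix (Fin n) (Fin n) ℂ) (hZd : IsDrazinInverse Z Zd)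
    (hBZ : B * Z = 0) (hZC : Z * C = 0) (hABC : (1 - A * Ad) * B * C = 0)
    (AWd : Matrix (Fin m) (Fin m) ℂ)
    (hAWd : IsDrazinInverse (A * (A * Ad + Ad * B * C * Ad)) AWd)
    (P Pd : Matrix (Fin m ⊕ Fin n) (Fin m ⊕ Fin n) ℂ)
    (hP : P = Matrix.fromBlocks (A ^ 2 * Ad) (A * Ad * B) (C * A * Ad) (C * Ad * B))
    (hPd : IsDrazinInverse P Pd)
    (T Td : Matrix (Fin m ⊕ Fin n) (Fin m ⊕ Fin n) ℂ)
    (hT : T = Matrix.fromBlocks (A * (1 - A * Ad)) ((1 - A * Ad) * B) 0 Z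
      + (1 - P * Pd) *
        Matrix.fromBlocks (A ^ 2 * Ad) (A * Ad * B) C (C * Ad * B))
    (hTd : IsDrazinInverse T Td)
    (n' : ℕ) (hn' : 1 ≤ n')
    (g : ℕ) (hg : 1 ≤ g)
    -- `g ≥ ind T`
    (hgT : T ^ g * (1 - T * Td) = 0) :
    Pd = Matrix.fromRows (1 : Matrix (Fin m) (Fin m) ℂ) (C * Ad) *
        (AWd ^ 2 * A) * Matrix.fromCols (1 : Matrix (Fin m) (Fin m) ℂ) (Ad * B) ∧
    Td = (1 - P * Pd) *
        ∑ j ∈ Finset.range n',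
          P ^ j * Matrix.fromBlocks 0 0 0 (Zd ^ (j + 1)) ∧
    IsDrazinInverse (Matrix.fromBlocks A B C D)
      (Pd +
        (∑ k ∈ Finset.range g,
          Pd ^ (k + 2) * Matrix.fromBlocks 0 0 (C * (1 - A * Ad)) 0 *
            T ^ k * (1 - T * Td))
        + Td) := by
  have hP' : P = blockP A Ad B C := hP
  have hBZd : B * Zd = 0 := hZd.mul_inv_eq_zero hBZ
  have hPF : P * fromBlocks 0 0 0 Zd = 0 := hP' ▸ blockP_mul_fromBlocks_eq_zero hBZd
  have hEP : blockE A Ad C * P = 0 := hP' ▸ blockE_mul_blockP_eq_zero hAd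
  have hNP : blockN A Ad B Z * P = 0 := hP' ▸ blockN_mul_blockP_eq_zero hAd hZC hABC
  rw [fromBlocks_eq_blockP_add_blockE, ← hP'] at hT
  have hTF : IsDrazinInverse T (fromBlocks 0 0 0 Zd) := hT ▸
    isDrazinInverse_add_one_sub_mul_add hPd (isDrazinInverse_blockN hAd hZd hBZ) hNP
      (blockN_mul_blockE_eq_zero hZC hABC) hEP blockE_mul_blockE_eq_zero hPF
      blockE_mul_fromBlocks_eq_zero
  obtain rfl : Td = fromBlocks 0 0 0 Zd := hTd.unique hTF
  refine ⟨hPd.unique (hP' ▸ isDrazinInverse_blockP hAd hAWd), ?_, ?_⟩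
  · have h := hPd.one_sub_mul_sum_pow_mul (G := fun j => fromBlocks 0 0 0 (Zd ^ (j + 1)))
      (fun j => hP' ▸ blockP_mul_fromBlocks_eq_zero (by rw [pow_succ', ← Matrix.mul_assoc, hBZd,
        Matrix.zero_mul])) hn'
    simpa using h.symm
  · rw [fromBlocks_eq_blockP_add_blockN_add_blockE hZ, ← hP']
    exact isDrazinInverse_add_add hPd (hP' ▸ blockP_mul_blockN_eq_zero hAd hBZ) hNP hEP hPF
      blockE_mul_fromBlocks_eq_zero hT hTF hg hgT

theorem stmt_9 {m n : ℕ}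
    (A Ad : Matrix (Fin m) (Fin m) ℂ) (B : Matrix (Fin m) (Fin n) ℂ)
    (C : Matrix (Fin n) (Fin m) ℂ) (D : Matrix (Fin n) (Fin n) ℂ)
    (hAd : IsDrazinInverse A Ad)
    (Z : Matrix (Fin n) (Fin n) ℂ) (hZ : Z = D - C * Ad * B)
    (Zd : Matrix (Fin n) (Fin n) ℂ) (hZd : IsDrazinInverse Z Zd)
    (hBZ : B * Z = 0) (hZC : Z * C = 0) (hABC : (1 - A * Ad) * B * C = 0)
    (AWd : Matrix (Fin m) (Fin m) ℂ)
    (hAWd : IsDrazinInverse (A * (A * Ad + Ad * B * C * Ad)) AWd)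
    (P Pd : Matrix (Fin m ⊕ Fin n) (Fin m ⊕ Fin n) ℂ)
    (hP : P = Matrix.fromBlocks (A ^ 2 * Ad) (A * Ad * B) (C * A * Ad) (C * Ad * B))
    (hPd : IsDrazinInverse P Pd)
    (T Td : Matrix (Fin m ⊕ Fin n) (Fin m ⊕ Fin n) ℂ)
    (hT : T = Matrix.fromBlocks (A * (1 - A * Ad)) ((1 - A * Ad) * B) 0 Z
      + (1 - P * Pd) *
        Matrix.fromBlocks (A ^ 2 * Ad) (A * Ad * B) C (C * Ad * B))
    (hTd : IsDrazinInverse T Td)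
    (n' : ℕ) (hn' : 1 ≤ n')
    -- `n' ≥ ind P`
    (hn'P : P ^ n' * (1 - P * Pd) = 0)
    (g : ℕ) (hg : 1 ≤ g)
    -- `g ≥ ind T`
    (hgT : T ^ g * (1 - T * Td) = 0) :
    Pd = Matrix.fromRows (1 : Matrix (Fin m) (Fin m) ℂ) (C * Ad) *
        (AWd ^ 2 * A) * Matrix.fromCols (1 : Matrix (Fin m) (Fin m) ℂ) (Ad * B) ∧
    Td = (1 - P * Pd) *
        ∑ j ∈ Finset.range n',
          P ^ j * Matrix.fromBlocks 0 0 0 (Zd ^ (j + 1)) ∧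
    IsDrazinInverse (Matrix.fromBlocks A B C D)
      (Pd +
        (∑ k ∈ Finset.range g,
          Pd ^ (k + 2) * Matrix.fromBlocks 0 0 (C * (1 - A * Ad)) 0 *
            T ^ k * (1 - T * Td))
        + Td) :=
  stmt_9_general A Ad B C D hAd Z hZ Zd hZd hBZ hZC hABC AWd hAWd P Pd hP hPd T Td hT hTd n' hn' g
    hg hgT
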